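/- Let δ' be an ordinal with max(κ,δ) ≤ δ' ≤ λ and θ' a cardinal with θ ≤ θ' ≤ κ, and assume there exist a [δ]^{<θ}-normal ideal and a [δ']^{<θ'}-normal ideal on P_κ(λ). Assume |δ|^{<θ̄} < |δ'|^{<θ̄'} < λ. Then NS^{[δ']^{<θ'}}_{κ,λ} ≠ NS^{[δ]^{<θ}}_{κ,λ} | A for every A ∈ (NS^{[δ]^{<θ}}_{κ,λ})⁺. -/

import Mathlib

/-!
Both least normal ideals are generated by the complements of closure sets `CSet κ λ σ γ G`.
Suppose `NS' = NS|A`. As `P_κ(λ) \ A ∈ NS'`, the `H₀`-closed sets containing some `c₀` lie in `A`.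
Let `m` inject `[δ']^{<θ̄'}` into `λ`, avoiding `δ'`, `c₀` and everything `H₀` generates from
`[δ']^{<θ̄'}` (at most `μ = |δ'|^{<θ̄'} < λ` points). Closure under the marker `[x] ↦ {m x}` is
`NS'`-large, hence `NS`-large inside `A`: some `G₀` and `c` force it on the `G₀`- and `H₀`-closed
sets containing `c₀ ∪ c`. Given `τ < θ̄'` and `x ∈ [δ']^{≤τ}`, the least such set containing
`x ∪ τ⁺` has `x` as a legal argument, so it contains `m x`; being generated by `G₀` and `H₀`, it
puts `m x` into `c` or into what `G₀` generates from `[δ]^{<θ̄}`, a set of size `< μ` because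
`|δ|^{<θ̄} < μ`. So `m` embeds `[δ']^{≤τ}` into that set, which fails once `|δ'|^τ` exceeds
its size.
-/

open Cardinal Set

namespace PklNormal

/-- `P_κ(l)`: the collection of subsets of (the set of ordinals below) `l`
of cardinality `< κ`. -/
def PSet (κ : Cardinal.{0}) (l : Ordinal.{0}) : Set (Set Ordinal.{0}) :=
  {a | a ⊆ Set.Iio l ∧ #↥a < Cardinal.lift.{1} κ}

/-- `e ∈ P_{|a ∩ σ|}(a ∩ γ)`. -/
def inP (σ : Cardinal.{0}) (γ : Ordinal.{0}) (a e : Set Ordinal.{0}) : Prop :=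
  e ⊆ a ∩ Set.Iio γ ∧ #↥e < #↥(a ∩ Set.Iio σ.ord)

/-- The collection `I_{κ,l}` of non-cofinal subsets of `P_κ(l)`. -/
def Ikl (κ : Cardinal.{0}) (l : Ordinal.{0}) : Set (Set (Set Ordinal.{0})) :=
  {B | B ⊆ PSet κ l ∧ ∃ a ∈ PSet κ l, ∀ b ∈ B, ¬ a ⊆ b}

/-- An ideal on `P_κ(l)`. -/
structure IsIdeal (κ : Cardinal.{0}) (l : Ordinal.{0})
    (K : Set (Set (Set Ordinal.{0}))) : Prop where
  mem_subset : ∀ B ∈ K, B ⊆ PSet κ l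
  subset_mem : ∀ B ∈ K, ∀ C ⊆ B, C ∈ K
  sUnion_mem : ∀ Y ⊆ K, Y.Nonempty → #↥Y < Cardinal.lift.{1} κ → ⋃₀ Y ∈ K
  nonCofinal_subset : Ikl κ l ⊆ K
  univ_not_mem : PSet κ l ∉ K

/-- `K⁺`: the subsets of `P_κ(l)` not in `K`. -/
def plus (κ : Cardinal.{0}) (l : Ordinal.{0}) (K : Set (Set (Set Ordinal.{0}))) :
    Set (Set (Set Ordinal.{0})) :=
  {B | B ⊆ PSet κ l ∧ B ∉ K}

/-- `K*`: the subsets of `P_κ(l)` whose complement is in `K`. -/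
def star (κ : Cardinal.{0}) (l : Ordinal.{0}) (K : Set (Set (Set Ordinal.{0}))) :
    Set (Set (Set Ordinal.{0})) :=
  {B | B ⊆ PSet κ l ∧ PSet κ l \ B ∈ K}

/-- `K|A`. -/
def restrict (κ : Cardinal.{0}) (l : Ordinal.{0}) (K : Set (Set (Set Ordinal.{0})))
    (A : Set (Set Ordinal.{0})) : Set (Set (Set Ordinal.{0})) :=
  {B | B ⊆ PSet κ l ∧ B ∩ A ∈ K}

/-- `∇^{[γ]^{<σ}} J`. -/
def nabla (κ : Cardinal.{0}) (l : Ordinal.{0}) (σ : Cardinal.{0}) (γ : Ordinal.{0})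
    (J : Set (Set (Set Ordinal.{0}))) : Set (Set (Set Ordinal.{0})) :=
  {B | ∃ F : Set Ordinal.{0} → Set (Set Ordinal.{0}),
    (∀ e ∈ PSet σ γ, F e ∈ J) ∧
    B ⊆ {a | a ∈ PSet κ l ∧ a ∩ Set.Iio σ.ord = ∅} ∪
      ⋃ e ∈ PSet σ γ, {a | a ∈ F e ∧ inP σ γ a e}}

/-- `J` is `[γ]^{<σ}`-normal. -/
def IsNormal (κ : Cardinal.{0}) (l : Ordinal.{0}) (σ : Cardinal.{0}) (γ : Ordinal.{0})
    (J : Set (Set (Set Ordinal.{0}))) : Prop :=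
  J = nabla κ l σ γ J

def IsNormalIdeal (κ : Cardinal.{0}) (l : Ordinal.{0}) (σ : Cardinal.{0}) (γ : Ordinal.{0})
    (J : Set (Set (Set Ordinal.{0}))) : Prop :=
  IsIdeal κ l J ∧ IsNormal κ l σ γ J

/-- `N` is the smallest `[γ]^{<σ}`-normal ideal on `P_κ(l)`. -/
def IsLeastNormalIdeal (κ : Cardinal.{0}) (l : Ordinal.{0}) (σ : Cardinal.{0}) (γ : Ordinal.{0})
    (N : Set (Set (Set Ordinal.{0}))) : Prop :=
  IsNormalIdeal κ l σ γ N ∧ ∀ J, IsNormalIdeal κ l σ γ J → N ⊆ J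

/-- `∇^δ K`, the ordinal-indexed diagonal union. -/
def nablaOrd (κ : Cardinal.{0}) (l : Ordinal.{0}) (δ : Ordinal.{0})
    (K : Set (Set (Set Ordinal.{0}))) : Set (Set (Set Ordinal.{0})) :=
  {B | ∃ F : Ordinal.{0} → Set (Set Ordinal.{0}),
    (∀ α < δ, F α ∈ K) ∧
    B ⊆ {a | a ∈ PSet κ l ∧ (0 : Ordinal) ∉ a} ∪
      ⋃ α ∈ Set.Iio δ, {a | a ∈ F α ∧ α ∈ a}}

/-- `J` is `δ`-normal. -/
def IsOrdNormal (κ : Cardinal.{0}) (l : Ordinal.{0}) (δ : Ordinal.{0})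
    (J : Set (Set (Set Ordinal.{0}))) : Prop :=
  J = nablaOrd κ l δ J

/-- `θ̄`: equals `θ` if `θ < κ`, or if `θ = κ` and `κ` is a limit cardinal;
equals `ν` if `θ = κ = ν⁺`. -/
noncomputable def thetaBar (κ θ : Cardinal.{0}) : Cardinal.{0} :=
  haveI := Classical.propDecidable (θ < κ ∨ Order.IsSuccLimit κ)
  if θ < κ ∨ Order.IsSuccLimit κ then θ else sSup {ν | Order.succ ν = κ}

/-- `cof(K)`: the least number of generators of `K`. -/
noncomputable def cofIdeal (K : Set (Set (Set Ordinal.{0}))) : Cardinal.{1} :=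
  sInf {c | ∃ S ⊆ K, #↥S = c ∧ ∀ B ∈ K, ∃ C ∈ S, B ⊆ C}

/-- The dominating number `𝔡^μ_{κ,l}`. -/
noncomputable def dNum (κ : Cardinal.{0}) (l : Ordinal.{0}) (μ : Cardinal.{1}) : Cardinal.{1} :=
  sInf {c | ∃ F : Set (μ.ord.ToType → Set Ordinal.{0}),
    #↥F = c ∧ (∀ f ∈ F, ∀ i, f i ∈ PSet κ l) ∧
    ∀ g : μ.ord.ToType → Set Ordinal.{0}, (∀ i, g i ∈ PSet κ l) →
      ∃ f ∈ F, ∀ i, g i ⊆ f i}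

/-- `u(ρ,μ)`: the least cardinality of a cofinal subset of `(P_ρ(μ), ⊆)`. -/
noncomputable def uNum (ρ μ : Cardinal.{0}) : Cardinal.{1} :=
  sInf {c | ∃ X ⊆ PSet ρ μ.ord, #↥X = c ∧ ∀ e ∈ PSet ρ μ.ord, ∃ x ∈ X, e ⊆ x}

/-- `cov(lam, ν, ν, 2)`: the least cardinality of an `X ⊆ P_ν(lam)` such that every
member of `P_ν(lam)` is contained in a member of `X`. -/
noncomputable def covNum (lam ν : Cardinal.{0}) : Cardinal.{1} :=
  sInf {c | ∃ X ⊆ PSet ν lam.ord, #↥X = c ∧ ∀ e ∈ PSet ν lam.ord, ∃ x ∈ X, e ⊆ x}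

/-- `C` is closed unbounded in `l`. -/
def IsClubIn (C : Set Ordinal.{0}) (l : Ordinal.{0}) : Prop :=
  C ⊆ Set.Iio l ∧ (∀ p < l, ∃ q ∈ C, p < q) ∧
    (∀ o < l, Order.IsSuccLimit o → (∀ p < o, ∃ q ∈ C, p < q ∧ q < o) → o ∈ C)

/-- `κ` is a Mahlo cardinal: the set of regular cardinals below `κ` is stationary in `κ`. -/
def IsMahlo (κ : Cardinal.{0}) : Prop :=
  ∀ C : Set Ordinal.{0}, IsClubIn C κ.ord →
    ∃ o ∈ C, ∃ ρ : Cardinal.{0}, ρ.IsRegular ∧ ρ.ord = o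

universe u

variable {κ σ σ' : Cardinal.{0}} {l γ γ' : Ordinal.{0}}

section PSet

lemma mem_PSet_of_subset {a b : Set Ordinal.{0}} (hb : b ∈ PSet κ l) (h : a ⊆ b) :
    a ∈ PSet κ l :=
  ⟨h.trans hb.1, (mk_le_mk_of_subset h).trans_lt hb.2⟩

lemma empty_mem_PSet (hκ : 0 < κ) : (∅ : Set Ordinal.{0}) ∈ PSet κ l :=
  ⟨empty_subset _, by simpa using hκ⟩

lemma mem_PSet_of_finite (hκ : ℵ₀ ≤ κ) {s : Set Ordinal.{0}} (hs : s ⊆ Iio l)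
    (hfin : s.Finite) : s ∈ PSet κ l :=
  ⟨hs, hfin.lt_aleph0.trans_le (aleph0_le_lift.2 hκ)⟩

lemma union_mem_PSet (hκ : ℵ₀ ≤ κ) {a b : Set Ordinal.{0}} (ha : a ∈ PSet κ l)
    (hb : b ∈ PSet κ l) : a ∪ b ∈ PSet κ l :=
  ⟨union_subset ha.1 hb.1, (mk_union_le a b).trans_lt
    (add_lt_of_lt (aleph0_le_lift.2 hκ) ha.2 hb.2)⟩

lemma iUnion_mem_PSet (hκ : κ.IsRegular) {ι : Type 1} {f : ι → Set Ordinal.{0}}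
    (hι : #ι < Cardinal.lift.{1} κ) (hf : ∀ i, f i ∈ PSet κ l) : ⋃ i, f i ∈ PSet κ l :=
  ⟨iUnion_subset fun i => (hf i).1, (mk_iUnion_le f).trans_lt <|
    mul_lt_of_lt hκ.lift.aleph0_le hι <|
      iSup_lt_of_lt_cof_ord (by rwa [hκ.lift.cof_ord]) fun i => (hf i).2⟩

lemma Iio_mem_PSet {ρ : Cardinal.{0}} (hρκ : ρ < κ) (hρl : ρ.ord ≤ l) :
    Iio ρ.ord ∈ PSet κ l :=
  ⟨Iio_subset_Iio hρl, by rw [mk_Iio_ordinal, card_ord]; exact lift_lt.2 hρκ⟩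

end PSet

section Ideal

lemma Ikl_of_subset {B C : Set (Set Ordinal.{0})} (h : B ∈ Ikl κ l) (hC : C ⊆ B) :
    C ∈ Ikl κ l :=
  let ⟨hB, w, hw, hwB⟩ := h
  ⟨hC.trans hB, w, hw, fun b hb => hwB b (hC hb)⟩

lemma empty_mem_Ikl (hκ : 0 < κ) : (∅ : Set (Set Ordinal.{0})) ∈ Ikl κ l :=
  ⟨empty_subset _, ∅, empty_mem_PSet hκ, fun _ hb => hb.elim⟩

lemma not_superset_mem_Ikl {w : Set Ordinal.{0}} (hw : w ∈ PSet κ l) :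
    {a | a ∈ PSet κ l ∧ ¬ w ⊆ a} ∈ Ikl κ l :=
  ⟨fun _ ha => ha.1, w, hw, fun _ hb => hb.2⟩

variable {K : Set (Set (Set Ordinal.{0}))}

lemma IsIdeal.union_mem (hK : IsIdeal κ l K) (hκ : ℵ₀ ≤ κ) {B C : Set (Set Ordinal.{0})}
    (hB : B ∈ K) (hC : C ∈ K) : B ∪ C ∈ K := by
  rw [← sUnion_pair]
  refine hK.sUnion_mem _ (pair_subset hB hC) (insert_nonempty _ _) ?_
  calc #↥({B, C} : Set (Set (Set Ordinal.{0}))) ≤ 1 + 1 :=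
        mk_insert_le.trans_eq (by rw [mk_singleton])
    _ < ℵ₀ := by exact_mod_cast natCast_lt_aleph0
    _ ≤ Cardinal.lift.{1} κ := aleph0_le_lift.2 hκ

lemma IsIdeal.not_mem_of_diff_mem (hK : IsIdeal κ l K) (hκ : ℵ₀ ≤ κ)
    {B : Set (Set Ordinal.{0})} (hB : PSet κ l \ B ∈ K) : B ∉ K := fun hB' =>
  hK.univ_not_mem <| hK.subset_mem _ (hK.union_mem hκ hB hB') _ fun a ha => by
    by_cases h : a ∈ B
    · exact Or.inr h
    · exact Or.inl ⟨ha, h⟩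

end Ideal

section Normal

variable {J : Set (Set (Set Ordinal.{0}))} {a b e : Set Ordinal.{0}}

lemma IsNormal.mem_of_subset (hJ : IsNormal κ l σ γ J) {B : Set (Set Ordinal.{0})}
    (F : Set Ordinal.{0} → Set (Set Ordinal.{0})) (hF : ∀ e ∈ PSet σ γ, F e ∈ J)
    (hB : B ⊆ {a | a ∈ PSet κ l ∧ a ∩ Iio σ.ord = ∅} ∪
      ⋃ e ∈ PSet σ γ, {a | a ∈ F e ∧ inP σ γ a e}) : B ∈ J := by
  rw [hJ]; exact ⟨F, hF, hB⟩

lemma inP.mono_set (h : inP σ γ a e) (hab : a ⊆ b) : inP σ γ b e :=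
  ⟨h.1.trans (inter_subset_inter_left _ hab),
    h.2.trans_le (mk_le_mk_of_subset (inter_subset_inter_left _ hab))⟩

lemma inP.mono (h : inP σ γ a e) (hσ : σ ≤ σ') (hγ : γ ≤ γ') : inP σ' γ' a e :=
  ⟨h.1.trans (inter_subset_inter_right _ (Iio_subset_Iio hγ)),
    h.2.trans_le (mk_le_mk_of_subset
      (inter_subset_inter_right _ (Iio_subset_Iio (ord_le_ord.2 hσ))))⟩

lemma inP.mem_PSet (h : inP σ γ a e) : e ∈ PSet σ γ :=
  ⟨h.1.trans inter_subset_right, h.2.trans_le <| (mk_le_mk_of_subset inter_subset_right).trans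
    (by rw [mk_Iio_ordinal, card_ord])⟩

lemma inP_empty (ha : (a ∩ Iio σ.ord).Nonempty) : inP σ γ a ∅ :=
  ⟨empty_subset _, by
    rw [mk_eq_zero]; exact (mk_ne_zero_iff.2 ha.to_subtype).bot_lt⟩

lemma IsIdeal.subset_nabla (hJ : IsIdeal κ l J) (hσ : 0 < σ) : J ⊆ nabla κ l σ γ J := by
  intro B hB
  refine ⟨fun _ => B, fun _ _ => hB, fun a ha => ?_⟩
  rcases (a ∩ Iio σ.ord).eq_empty_or_nonempty with h | h
  · exact Or.inl ⟨hJ.mem_subset B hB ha, h⟩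
  · exact Or.inr (mem_biUnion (empty_mem_PSet hσ) ⟨ha, inP_empty h⟩)

/-- Sets with empty trace on `σ` but not on `σ'` all miss `0`, so they form a non-cofinal set. -/
lemma IsNormal.of_le (hJ : IsIdeal κ l J) (hJn : IsNormal κ l σ' γ' J) (hκ : ℵ₀ ≤ κ)
    (hσ : 0 < σ) (hσσ' : σ ≤ σ') (hγγ' : γ ≤ γ') (hl : 0 < l) : IsNormal κ l σ γ J := by
  classical
  refine (hJ.subset_nabla hσ).antisymm ?_
  rintro B ⟨F, hF, hB⟩
  set T := {a | a ∈ PSet κ l ∧ a ∩ Iio σ.ord = ∅ ∧ (a ∩ Iio σ'.ord).Nonempty}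
  have hT : T ∈ J := by
    refine hJ.nonCofinal_subset ⟨fun a ha => ha.1, {0},
      mem_PSet_of_finite hκ (by simpa using hl) (finite_singleton 0), ?_⟩
    rintro b ⟨-, hb, -⟩ h0
    exact hb.subset ⟨h0 rfl, by simpa using hσ⟩
  refine hJn.mem_of_subset (fun e => (if e ∈ PSet σ γ then F e else ∅) ∪ T)
    (fun e _ => hJ.union_mem hκ ?_ hT) fun a ha => ?_
  · split_ifs with he
    · exact hF e he
    · exact hJ.nonCofinal_subset (empty_mem_Ikl (aleph0_pos.trans_le hκ))
  rcases hB ha with ⟨haP, ha0⟩ | ha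
  · rcases (a ∩ Iio σ'.ord).eq_empty_or_nonempty with h | h
    · exact Or.inl ⟨haP, h⟩
    · exact Or.inr (mem_biUnion (empty_mem_PSet (hσ.trans_le hσσ'))
        ⟨Or.inr ⟨haP, ha0, h⟩, inP_empty h⟩)
  · obtain ⟨e, he, haF, hae⟩ := mem_iUnion₂.1 ha
    exact Or.inr (mem_biUnion (hae.mono hσσ' hγγ').mem_PSet
      ⟨Or.inl (by rw [if_pos he]; exact haF), hae.mono hσσ' hγγ'⟩)

end Normal

section Closure

/-- Closure under `G`, which maps finite tuples (coded as lists) of members of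
`P_{|a∩σ|}(a∩γ)` into `a`. -/
def CSet (κ : Cardinal.{0}) (l : Ordinal.{0}) (σ : Cardinal.{0}) (γ : Ordinal.{0})
    (G : List (Set Ordinal.{0}) → Set Ordinal.{0}) : Set (Set Ordinal.{0}) :=
  {a | a ∈ PSet κ l ∧ (a ∩ Iio σ.ord).Nonempty ∧
    ∀ es : List (Set Ordinal.{0}), (∀ e ∈ es, inP σ γ a e) → G es ⊆ a}

def CnSet (κ : Cardinal.{0}) (l : Ordinal.{0}) (σ : Cardinal.{0}) (γ : Ordinal.{0})
    (G : List (Set Ordinal.{0}) → Set Ordinal.{0}) (n : ℕ) : Set (Set Ordinal.{0}) :=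
  {a | a ∈ PSet κ l ∧ (a ∩ Iio σ.ord).Nonempty ∧
    ∀ es : List (Set Ordinal.{0}), es.length < n → (∀ e ∈ es, inP σ γ a e) → G es ⊆ a}

variable {J : Set (Set (Set Ordinal.{0}))}

/-- Normality peels off the first entry of the tuple, reducing the length bound by one. -/
lemma diff_CnSet_mem (hJ : IsIdeal κ l J) (hJn : IsNormal κ l σ γ J) (hκ : ℵ₀ ≤ κ)
    (hσ : 0 < σ) (n : ℕ) {G : List (Set Ordinal.{0}) → Set Ordinal.{0}}
    (hG : ∀ es, G es ∈ PSet κ l) : PSet κ l \ CnSet κ l σ γ G n ∈ J := by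
  induction n generalizing G with
  | zero =>
    refine hJn.mem_of_subset (fun _ => ∅) (fun _ _ => hJ.nonCofinal_subset
      (empty_mem_Ikl (aleph0_pos.trans_le hκ))) fun a ⟨haP, ha⟩ => Or.inl ⟨haP, ?_⟩
    by_contra h
    exact ha ⟨haP, nonempty_iff_ne_empty.2 h, fun es hes => absurd hes (Nat.not_lt_zero _)⟩
  | succ n ih =>
    refine hJn.mem_of_subset
      (fun e => (PSet κ l \ CnSet κ l σ γ (fun es => G (e :: es)) n) ∪
        {a | a ∈ PSet κ l ∧ ¬ G [] ⊆ a})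
      (fun e _ => hJ.union_mem hκ (ih fun es => hG (e :: es))
        (hJ.nonCofinal_subset (not_superset_mem_Ikl (hG [])))) fun a ⟨haP, ha⟩ => ?_
    rcases (a ∩ Iio σ.ord).eq_empty_or_nonempty with htr | htr
    · exact Or.inl ⟨haP, htr⟩
    obtain ⟨es, hlen, hes, hG⟩ : ∃ es : List (Set Ordinal.{0}), es.length < n + 1 ∧
        (∀ e ∈ es, inP σ γ a e) ∧ ¬ G es ⊆ a := by
      by_contra! h
      exact ha ⟨haP, htr, h⟩
    refine Or.inr ?_
    cases es with
    | nil => exact mem_biUnion (empty_mem_PSet hσ) ⟨Or.inr ⟨haP, hG⟩, inP_empty htr⟩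
    | cons e es =>
      have he := hes e List.mem_cons_self
      refine mem_biUnion he.mem_PSet ⟨Or.inl ⟨haP, fun haC => hG ?_⟩, he⟩
      exact haC.2.2 es (by simpa using hlen) fun e' he' => hes e' (List.mem_cons_of_mem e he')

lemma diff_CSet_mem (hJ : IsIdeal κ l J) (hJn : IsNormal κ l σ γ J) (hκ : ℵ₀ < κ)
    (hσ : 0 < σ) {G : List (Set Ordinal.{0}) → Set Ordinal.{0}}
    (hG : ∀ es, G es ∈ PSet κ l) : PSet κ l \ CSet κ l σ γ G ∈ J := by
  have hunion : PSet κ l \ CSet κ l σ γ G =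
      ⋃ n : ULift.{1} ℕ, PSet κ l \ CnSet κ l σ γ G n.down := by
    ext a
    simp only [mem_iUnion, mem_sdiff]
    constructor
    · rintro ⟨haP, ha⟩
      by_cases htr : (a ∩ Iio σ.ord).Nonempty
      · obtain ⟨es, hes, hG⟩ : ∃ es : List (Set Ordinal.{0}),
            (∀ e ∈ es, inP σ γ a e) ∧ ¬ G es ⊆ a := by
          by_contra! h
          exact ha ⟨haP, htr, h⟩
        exact ⟨⟨es.length + 1⟩, haP, fun haC => hG (haC.2.2 es es.length.lt_succ_self hes)⟩
      · exact ⟨⟨0⟩, haP, fun haC => htr haC.2.1⟩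
    · rintro ⟨n, haP, ha⟩
      exact ⟨haP, fun haC => ha ⟨haC.1, haC.2.1, fun es _ => haC.2.2 es⟩⟩
  rw [hunion, ← sUnion_range]
  refine hJ.sUnion_mem _ (range_subset_iff.2 fun n => diff_CnSet_mem hJ hJn hκ.le hσ n.down hG)
    (range_nonempty _) ?_
  refine mk_range_le.trans_lt ?_
  simpa using hκ

lemma CSet_anti {G G' : List (Set Ordinal.{0}) → Set Ordinal.{0}}
    (h : ∀ es, G es ⊆ G' es) : CSet κ l σ γ G' ⊆ CSet κ l σ γ G :=
  fun _ ⟨haP, htr, ha⟩ => ⟨haP, htr, fun es hes => (h es).trans (ha es hes)⟩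

lemma sInter_mem_CSet {G : List (Set Ordinal.{0}) → Set Ordinal.{0}} {F : Set (Set Ordinal.{0})}
    {b : Set Ordinal.{0}} (hb : b ∈ F) (hF : F ⊆ CSet κ l σ γ G)
    (htr : (⋂₀ F ∩ Iio σ.ord).Nonempty) : ⋂₀ F ∈ CSet κ l σ γ G :=
  ⟨mem_PSet_of_subset (hF hb).1 (sInter_subset_of_mem hb), htr, fun es hes =>
    subset_sInter fun _ hc => (hF hc).2.2 es fun e he =>
      (hes e he).mono_set (sInter_subset_of_mem hc)⟩

end Closure

section ClosureIdeal

/-- `NS^{[γ]^{<σ}}_{κ,l}`, as soon as some `[γ]^{<σ}`-normal ideal exists. -/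
def closureIdeal (κ : Cardinal.{0}) (l : Ordinal.{0}) (σ : Cardinal.{0}) (γ : Ordinal.{0}) :
    Set (Set (Set Ordinal.{0})) :=
  {X | X ⊆ PSet κ l ∧ ∃ G : List (Set Ordinal.{0}) → Set Ordinal.{0},
    (∀ es, G es ∈ PSet κ l) ∧ X ∩ CSet κ l σ γ G ∈ Ikl κ l}

lemma exists_of_mem_closureIdeal {X : Set (Set Ordinal.{0})} (hX : X ∈ closureIdeal κ l σ γ) :
    ∃ G : List (Set Ordinal.{0}) → Set Ordinal.{0}, (∀ es, G es ∈ PSet κ l) ∧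
      ∃ c ∈ PSet κ l, ∀ a ∈ CSet κ l σ γ G, c ⊆ a → a ∉ X :=
  let ⟨_, G, hG, _, c, hc, hcX⟩ := hX
  ⟨G, hG, c, hc, fun a haC hca haX => hcX a ⟨haX, haC⟩ hca⟩

lemma closureIdeal_isIdeal (hκ : κ.IsRegular) (hκ₀ : ℵ₀ < κ) (hσ : 0 < σ)
    (hex : ∃ J, IsNormalIdeal κ l σ γ J) : IsIdeal κ l (closureIdeal κ l σ γ) := by
  have hκ0 : (0 : Cardinal.{0}) < κ := aleph0_pos.trans hκ₀
  constructor
  · exact fun X hX => hX.1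
  · rintro B ⟨hB, G, hG, hBG⟩ C hC
    exact ⟨hC.trans hB, G, hG, Ikl_of_subset hBG (inter_subset_inter_left _ hC)⟩
  · intro Y hY _ hYκ
    choose G hG hYG using fun B : ↥Y => (hY B.2).2
    choose w hw hwY using fun B : ↥Y => (hYG B).2
    refine ⟨sUnion_subset fun B hB => (hY hB).1, fun es => ⋃ B : ↥Y, G B es,
      fun es => iUnion_mem_PSet hκ hYκ fun B => hG B es,
      ⟨inter_subset_left.trans (sUnion_subset fun B hB => (hY hB).1), ⋃ B : ↥Y, w B,
        iUnion_mem_PSet hκ hYκ hw, ?_⟩⟩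
    rintro b ⟨⟨B, hB, hbB⟩, hbC⟩ hwb
    exact hwY ⟨B, hB⟩ b ⟨hbB, CSet_anti (fun es => subset_iUnion (G · es) ⟨B, hB⟩) hbC⟩
      ((subset_iUnion w ⟨B, hB⟩).trans hwb)
  · exact fun X hX => ⟨hX.1, fun _ => ∅, fun _ => empty_mem_PSet hκ0,
      Ikl_of_subset hX inter_subset_left⟩
  · rintro ⟨-, G, hG, hPG⟩
    obtain ⟨J, hJ, hJn⟩ := hex
    exact hJ.not_mem_of_diff_mem hκ.aleph0_le (diff_CSet_mem hJ hJn hκ₀ hσ hG)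
      (hJ.nonCofinal_subset (Ikl_of_subset hPG (subset_inter (fun _ ha => ha.1) subset_rfl)))

/-- A diagonal union of sets `F e` avoiding the cones above `w e` in `CSet (G e)` avoids the
closure set of `e :: es ↦ w e ∪ G e es`. -/
lemma closureIdeal_isNormalIdeal (hκ : κ.IsRegular) (hκ₀ : ℵ₀ < κ) (hσ : 0 < σ)
    (hex : ∃ J, IsNormalIdeal κ l σ γ J) : IsNormalIdeal κ l σ γ (closureIdeal κ l σ γ) := by
  classical
  have hI := closureIdeal_isIdeal hκ hκ₀ hσ hex
  have hκ0 : (0 : Cardinal.{0}) < κ := aleph0_pos.trans hκ₀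
  refine ⟨hI, (hI.subset_nabla hσ).antisymm ?_⟩
  rintro X ⟨F, hF, hX⟩
  choose G hG w hw hwF using fun e : ↥(PSet σ γ) => exists_of_mem_closureIdeal (hF e e.2)
  let Gs : List (Set Ordinal.{0}) → Set Ordinal.{0}
    | [] => ∅
    | e :: es => if he : e ∈ PSet σ γ then w ⟨e, he⟩ ∪ G ⟨e, he⟩ es else ∅
  have hGs : ∀ es, Gs es ∈ PSet κ l := by
    rintro (_ | ⟨e, es⟩)
    · exact empty_mem_PSet hκ0
    · by_cases he : e ∈ PSet σ γ
      · simpa only [Gs, dif_pos he] using union_mem_PSet hκ.aleph0_le (hw _) (hG _ es)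
      · simpa only [Gs, dif_neg he] using empty_mem_PSet hκ0
  have hXP : X ⊆ PSet κ l := fun a ha => by
    rcases hX ha with h | h
    · exact h.1
    · obtain ⟨e, he, haF, -⟩ := mem_iUnion₂.1 h
      exact (hF e he).1 haF
  refine ⟨hXP, Gs, hGs, ?_⟩
  convert empty_mem_Ikl hκ0
  refine eq_empty_of_forall_notMem fun a ⟨haX, haP, htr, haG⟩ => ?_
  rcases hX haX with h | h
  · exact htr.ne_empty h.2
  obtain ⟨e, he, haF, hae⟩ := mem_iUnion₂.1 h
  have hGse : ∀ es, Gs (e :: es) = w ⟨e, he⟩ ∪ G ⟨e, he⟩ es := fun es => dif_pos he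
  have hcons : ∀ es, (∀ e' ∈ es, inP σ γ a e') → w ⟨e, he⟩ ∪ G ⟨e, he⟩ es ⊆ a :=
    fun es hes => hGse es ▸ haG (e :: es) (List.forall_mem_cons.2 ⟨hae, hes⟩)
  exact hwF ⟨e, he⟩ a ⟨haP, htr, fun es hes => subset_union_right.trans (hcons es hes)⟩
    (subset_union_left.trans (hcons [] (by simp))) haF

lemma IsLeastNormalIdeal.subset_closureIdeal {N : Set (Set (Set Ordinal.{0}))}
    (hN : IsLeastNormalIdeal κ l σ γ N) (hκ : κ.IsRegular) (hκ₀ : ℵ₀ < κ) (hσ : 0 < σ) :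
    N ⊆ closureIdeal κ l σ γ :=
  hN.2 _ (closureIdeal_isNormalIdeal hκ hκ₀ hσ ⟨N, hN.1⟩)

end ClosureIdeal

lemma aleph0_le_mk_of_mem_CnSet {G : List (Set Ordinal.{0}) → Set Ordinal.{0}}
    {a : Set Ordinal.{0}} (hωγ : Ordinal.omega0 ≤ γ) (hσ : 1 < σ.ord)
    (hG0 : ({0, 1} : Set Ordinal.{0}) ⊆ G [])
    (hGsucc : ∀ n : ℕ, ((n : Ordinal.{0}) + 1) ∈ G [{(n : Ordinal.{0})}])
    (ha : a ∈ CnSet κ l σ γ G 2) : ℵ₀ ≤ #↥a := by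
  have h01 : ({0, 1} : Set Ordinal.{0}) ⊆ a := hG0.trans (ha.2.2 [] (by simp) (by simp))
  have htr : 1 < #↥(a ∩ Iio σ.ord) := by
    have h01σ : ({0, 1} : Set Ordinal.{0}) ⊆ a ∩ Iio σ.ord :=
      subset_inter h01 (insert_subset_iff.2
        ⟨(zero_lt_one (α := Ordinal)).trans hσ, singleton_subset_iff.2 hσ⟩)
    refine lt_of_lt_of_le ?_ (mk_le_mk_of_subset h01σ)
    rw [mk_insert (by simp), mk_singleton]
    norm_num
  have hnat : ∀ n : ℕ, (n : Ordinal.{0}) ∈ a := by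
    intro n
    induction n with
    | zero => exact h01 (by simp)
    | succ n ih =>
      have hn : inP σ γ a {(n : Ordinal.{0})} := by
        refine ⟨singleton_subset_iff.2 ⟨ih, ?_⟩, by rwa [mk_singleton]⟩
        exact (Ordinal.natCast_lt_omega0 n).trans_le hωγ
      exact_mod_cast ha.2.2 [{(n : Ordinal.{0})}] (by simp) (by simpa using hn) (hGsucc n)
  simpa using mk_le_of_injective (f := fun n : ULift.{1} ℕ => (⟨n.down, hnat n.down⟩ : ↥a))
    fun m n h => ULift.ext _ _ (Nat.cast_injective (R := Ordinal) (congrArg Subtype.val h))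

/-- On `P_ω(l)` the closure requirement `G [] = {0, 1}`, `G [{n}] = {n + 1}` can only be met by
infinite sets. -/
lemma aleph0_lt_of_isNormalIdeal {J : Set (Set (Set Ordinal.{0}))} (hκ : κ.IsRegular)
    (hσ : 2 ≤ σ) (hκγ : κ.ord ≤ γ) (hγl : γ ≤ l) (hJ : IsNormalIdeal κ l σ γ J) : ℵ₀ < κ := by
  refine hκ.aleph0_le.lt_of_ne fun hκω => ?_
  subst hκω
  rw [ord_aleph0] at hκγ
  let G : List (Set Ordinal.{0}) → Set Ordinal.{0} := fun es =>
    {0, 1} ∪ {p | ∃ n : ℕ, es = [{(n : Ordinal.{0})}] ∧ p = n + 1}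
  have hG : ∀ es, G es ∈ PSet ℵ₀ l := by
    intro es
    refine mem_PSet_of_finite le_rfl ?_ ((toFinite _).union (Subsingleton.finite ?_))
    · rintro p ((rfl | rfl) | ⟨n, -, rfl⟩) <;>
        refine mem_Iio.2 <| lt_of_lt_of_le ?_ (hκγ.trans hγl)
      · exact Ordinal.omega0_pos
      · exact Ordinal.one_lt_omega0
      · exact_mod_cast Ordinal.natCast_lt_omega0 (n + 1)
    · rintro _ ⟨m, hm, rfl⟩ _ ⟨n, hn, rfl⟩
      rw [hm, List.cons.injEq, singleton_eq_singleton_iff, Nat.cast_inj] at hn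
      rw [hn.1]
  have hσ1 : (1 : Ordinal.{0}) < σ.ord := by
    simpa using ord_lt_ord.2 (Cardinal.one_lt_two.trans_le hσ)
  suffices CnSet ℵ₀ l σ γ G 2 = ∅ by
    have h := diff_CnSet_mem hJ.1 hJ.2 le_rfl (zero_lt_two.trans_le hσ) 2 hG
    rw [this, sdiff_empty] at h
    exact hJ.1.univ_not_mem h
  refine eq_empty_of_forall_notMem fun a ha => (ha.1.2.trans_le (by simp)).not_ge
    (aleph0_le_mk_of_mem_CnSet hκγ hσ1 subset_union_left (fun n => Or.inr ⟨n, rfl, rfl⟩) ha)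

section ThetaBar

variable {θ : Cardinal.{0}}

lemma thetaBar_eq (h : θ < κ ∨ Order.IsSuccLimit κ) : thetaBar κ θ = θ := by
  simp only [thetaBar, if_pos h]

lemma succ_thetaBar (hκ : 0 < κ) (h : ¬ (θ < κ ∨ Order.IsSuccLimit κ)) :
    Order.succ (thetaBar κ θ) = κ := by
  obtain ⟨ν, hν⟩ := Order.not_isSuccPrelimit_iff.1 fun hpre =>
    h (Or.inr (Order.IsSuccLimit.mk (not_isMin_iff.2 ⟨0, hκ⟩) hpre))
  have hS : {ν' | Order.succ ν' = κ} = {ν} := eq_singleton_iff_unique_mem.2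
    ⟨hν.succ_eq, fun ν' h' => Order.succ_injective (h'.trans hν.succ_eq.symm)⟩
  simp only [thetaBar, if_neg h, hS, csSup_singleton, hν.succ_eq]

lemma thetaBar_le_self (hκ : 0 < κ) : thetaBar κ θ ≤ θ := by
  by_cases h : θ < κ ∨ Order.IsSuccLimit κ
  · rw [thetaBar_eq h]
  · calc thetaBar κ θ ≤ Order.succ (thetaBar κ θ) := Order.le_succ _
      _ = κ := succ_thetaBar hκ h
      _ ≤ θ := not_lt.1 fun h' => h (Or.inl h')

lemma one_lt_thetaBar (hκ : ℵ₀ ≤ κ) (hθ : 1 < θ) : 1 < thetaBar κ θ := by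
  by_cases h : θ < κ ∨ Order.IsSuccLimit κ
  · rwa [thetaBar_eq h]
  · by_contra! h1
    have : κ < ℵ₀ := succ_thetaBar (aleph0_pos.trans_le hκ) h ▸
      (Order.succ_le_succ h1).trans_lt (isSuccLimit_aleph0.succ_lt one_lt_aleph0)
    exact this.not_ge hκ

lemma succ_lt_of_lt_thetaBar (hκ : 0 < κ) (hθκ : θ ≤ κ) {τ : Cardinal.{0}}
    (hτ : τ < thetaBar κ θ) : Order.succ τ < κ := by
  by_cases h : θ < κ ∨ Order.IsSuccLimit κ
  · rw [thetaBar_eq h] at hτ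
    rcases h with h | h
    · exact (Order.succ_le_of_lt hτ).trans_lt h
    · exact h.succ_lt (hτ.trans_le hθκ)
  · exact (Order.succ_le_of_lt hτ).trans_lt ((Order.lt_succ _).trans_eq (succ_thetaBar hκ h))

lemma inP.mem_PSet_thetaBar {a e : Set Ordinal.{0}} (hκ : 0 < κ) (ha : a ∈ PSet κ l)
    (h : inP θ γ a e) : e ∈ PSet (thetaBar κ θ) γ := by
  by_cases hc : θ < κ ∨ Order.IsSuccLimit κ
  · rw [thetaBar_eq hc]; exact h.mem_PSet
  · refine ⟨h.mem_PSet.1, h.2.trans_le ((mk_le_mk_of_subset inter_subset_left).trans ?_)⟩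
    rw [← Order.lt_succ_iff, ← lift_succ, succ_thetaBar hκ hc]
    exact ha.2

end ThetaBar

section Hull

def closureUnion (G : List (Set Ordinal.{0}) → Set Ordinal.{0}) (E : Set (Set Ordinal.{0})) :
    Set Ordinal.{0} :=
  ⋃ es : List ↥E, G (es.map (↑))

variable {G H : List (Set Ordinal.{0}) → Set Ordinal.{0}}

lemma subset_closureUnion {E : Set (Set Ordinal.{0})} {es : List (Set Ordinal.{0})}
    (hes : ∀ e ∈ es, e ∈ E) : G es ⊆ closureUnion G E := by
  lift es to List ↥E using hes
  exact subset_iUnion (fun es : List ↥E => G (es.map (↑))) es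

lemma inter_mem_CSet {a U : Set Ordinal.{0}} (hκ : 0 < κ) (ha : a ∈ CSet κ l σ γ G)
    (hU : closureUnion G (PSet (thetaBar κ σ) γ) ⊆ U) (htr : (a ∩ U ∩ Iio σ.ord).Nonempty) :
    a ∩ U ∈ CSet κ l σ γ G := by
  refine ⟨mem_PSet_of_subset ha.1 inter_subset_left, htr, fun es hes => ?_⟩
  have hes' : ∀ e ∈ es, inP σ γ a e := fun e he => (hes e he).mono_set inter_subset_left
  exact subset_inter (ha.2.2 es hes') ((subset_closureUnion fun e he =>
    (hes' e he).mem_PSet_thetaBar hκ ha.1).trans hU)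

/-- The witness is the intersection of all sets closed under `G` and `H` containing `y`. -/
lemma exists_hull {K : Set (Set (Set Ordinal.{0}))} (hK : IsIdeal κ l K) (hκ : ℵ₀ ≤ κ)
    (hσ : 0 < σ) (hσ' : 0 < σ') (hG : PSet κ l \ CSet κ l σ γ G ∈ K)
    (hH : PSet κ l \ CSet κ l σ' γ' H ∈ K) {y : Set Ordinal.{0}} (hy : y ∈ PSet κ l)
    (hy0 : 0 ∈ y) :
    ∃ a ∈ CSet κ l σ γ G, a ∈ CSet κ l σ' γ' H ∧ y ⊆ a ∧
      a ⊆ y ∪ closureUnion G (PSet (thetaBar κ σ) γ) ∪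
        closureUnion H (PSet (thetaBar κ σ') γ') := by
  have hκ0 : 0 < κ := aleph0_pos.trans_le hκ
  set F := {b | b ∈ CSet κ l σ γ G ∧ b ∈ CSet κ l σ' γ' H ∧ y ⊆ b}
  obtain ⟨b, hb⟩ : F.Nonempty := by
    refine nonempty_iff_ne_empty.2 fun hF => hK.not_mem_of_diff_mem hκ ?_
      (hF ▸ hK.nonCofinal_subset (empty_mem_Ikl hκ0))
    refine hK.subset_mem _ (hK.union_mem hκ (hK.union_mem hκ hG hH)
      (hK.nonCofinal_subset (not_superset_mem_Ikl hy))) _ fun a ⟨haP, haF⟩ => ?_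
    by_cases haG : a ∈ CSet κ l σ γ G
    · by_cases haH : a ∈ CSet κ l σ' γ' H
      · exact Or.inr ⟨haP, fun hya => haF ⟨haG, haH, hya⟩⟩
      · exact Or.inl (Or.inr ⟨haP, haH⟩)
    · exact Or.inl (Or.inl ⟨haP, haG⟩)
  set U := y ∪ closureUnion G (PSet (thetaBar κ σ) γ) ∪ closureUnion H (PSet (thetaBar κ σ') γ')
  have hyF : y ⊆ ⋂₀ F := subset_sInter fun _ hb => hb.2.2
  have htr : ∀ {ρ : Cardinal.{0}}, 0 < ρ → (⋂₀ F ∩ U ∩ Iio ρ.ord).Nonempty := fun hρ =>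
    ⟨0, ⟨hyF hy0, Or.inl (Or.inl hy0)⟩, by simpa using hρ⟩
  have hFG : ⋂₀ F ∈ CSet κ l σ γ G := sInter_mem_CSet hb (fun _ hb => hb.1)
    ((htr hσ).mono (inter_subset_inter_left _ inter_subset_left))
  have hFH : ⋂₀ F ∈ CSet κ l σ' γ' H := sInter_mem_CSet hb (fun _ hb => hb.2.1)
    ((htr hσ').mono (inter_subset_inter_left _ inter_subset_left))
  have hUF : ⋂₀ F ∩ U ∈ F :=
    ⟨inter_mem_CSet hκ0 hFG (fun _ h => Or.inl (Or.inr h)) (htr hσ),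
      inter_mem_CSet hκ0 hFH subset_union_right (htr hσ'),
      subset_inter hyF (subset_union_left.trans subset_union_left)⟩
  exact ⟨⋂₀ F, hFG, hFH, hyF, fun o ho => (sInter_subset_of_mem hUF ho).2⟩

end Hull

section Counting

lemma le_two_powerlt (c : Cardinal) : c ≤ 2 ^< c := by
  by_contra! h
  exact (cantor _).not_ge (le_powerlt 2 h)

lemma powerlt_le_powerlt_right {a b c : Cardinal} (h : a ≤ b) : a ^< c ≤ b ^< c :=
  powerlt_le.2 fun _ hx => (power_le_power_right h).trans (le_powerlt b hx)

/-- Graphs of functions `c → s` are distinct subsets of `s × c ≃ s` of size `c`. -/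
lemma power_le_mk_bounded_subset {α : Type*} (s : Set α) {c : Cardinal} (hs : ℵ₀ ≤ #s)
    (hc : c ≤ #s) : #s ^ c ≤ #{t : Set α // t ⊆ s ∧ #t ≤ c} := by
  rcases eq_or_ne c 0 with rfl | hc0
  · rw [power_zero, Cardinal.one_le_iff_ne_zero, mk_ne_zero_iff]
    exact ⟨⟨∅, empty_subset _, by simp⟩⟩
  obtain ⟨e⟩ : Nonempty (↥s × c.out ≃ ↥s) := Cardinal.eq.1 (by
    rw [mk_prod, lift_id, mk_out, lift_id, mul_eq_left hs hc hc0])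
  let graph (f : c.out → ↥s) : Set α := (↑) '' (e '' range fun i => (f i, i))
  have hgraph : ∀ f, graph f ⊆ s ∧ #(graph f) ≤ c := fun f =>
    ⟨by rintro _ ⟨x, -, rfl⟩; exact x.2,
      mk_image_le.trans (mk_image_le.trans (mk_range_le.trans_eq (mk_out c)))⟩
  conv_lhs => rw [← mk_out c, power_def]
  refine mk_le_of_injective (f := fun f => ⟨graph f, hgraph f⟩) fun f g hfg => funext fun i => ?_
  have h := e.injective.image_injective
    (Subtype.val_injective.image_injective (congrArg Subtype.val hfg))
  obtain ⟨j, hj⟩ : (f i, i) ∈ range fun i => (g i, i) := h ▸ mem_range_self i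
  obtain ⟨hgf, rfl⟩ := Prod.mk.inj hj
  exact hgf.symm

lemma lift_power_le_mk_bounded_subset {β : Ordinal.{0}} {τ : Cardinal.{0}} (hβ : ℵ₀ ≤ β.card)
    (hτ : τ ≤ β.card) :
    Cardinal.lift.{1} (β.card ^ τ) ≤
      #{x : Set Ordinal.{0} | x ⊆ Iio β ∧ #x ≤ Cardinal.lift.{1} τ} := by
  have h := power_le_mk_bounded_subset (Iio β) (c := Cardinal.lift.{1} τ)
    (by rw [mk_Iio_ordinal]; exact aleph0_le_lift.2 hβ) (by rw [mk_Iio_ordinal]; exact lift_le.2 hτ)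
  rwa [mk_Iio_ordinal, ← lift_power] at h

lemma mk_PSet_le (ϑ : Cardinal.{0}) (β : Ordinal.{0}) :
    #(PSet ϑ β) ≤ Cardinal.lift.{1} (max ℵ₀ (β.card ^< ϑ)) := by
  rcases lt_or_ge β.card ℵ₀ with hβ | hβ
  · have hfin : (Iio β).Finite := lt_aleph0_iff_set_finite.1 (by
      rw [mk_Iio_ordinal]; exact lift_lt_aleph0.2 hβ)
    exact (hfin.powerset.subset fun x hx => hx.1).lt_aleph0.le.trans (by simp)
  let level (τ : Iio ϑ.ord) := {x : Set Ordinal.{0} | x ⊆ Iio β ∧ #x ≤ Cardinal.lift.{1} τ.1.card}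
  have hcover : PSet ϑ β ⊆ ⋃ τ, level τ := fun x ⟨hxβ, hx⟩ => by
    obtain ⟨τ, hτ, hxτ⟩ := lt_lift_iff.1 hx
    exact mem_iUnion.2 ⟨⟨τ.ord, ord_lt_ord.2 hτ⟩, hxβ, by rw [card_ord, hxτ]⟩
  have hlevel : ∀ τ, #(level τ) ≤ Cardinal.lift.{1} (β.card ^< ϑ) := fun τ => by
    refine (mk_bounded_subset_le _ _).trans ?_
    rw [mk_Iio_ordinal, max_eq_left (aleph0_le_lift.2 hβ), ← lift_power]
    exact lift_le.2 (le_powerlt _ (lt_ord.1 τ.2))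
  have hϑ : ϑ ≤ β.card ^< ϑ := (le_two_powerlt ϑ).trans (powerlt_le_powerlt_right
    ((natCast_lt_aleph0 (n := 2)).le.trans hβ))
  calc #(PSet ϑ β) ≤ #(Iio ϑ.ord) * ⨆ τ, #(level τ) :=
        (mk_le_mk_of_subset hcover).trans (mk_iUnion_le _)
    _ ≤ Cardinal.lift.{1} (ϑ * β.card ^< ϑ) := by
      rw [lift_mul, mk_Iio_ordinal, card_ord]
      exact mul_le_mul' le_rfl (ciSup_le' hlevel)
    _ ≤ Cardinal.lift.{1} (max ℵ₀ (β.card ^< ϑ)) := lift_le.2 <| (mul_le_max _ _).trans <| by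
      rw [max_eq_right hϑ, max_comm]

lemma mk_closureUnion_le {G : List (Set Ordinal.{0}) → Set Ordinal.{0}}
    {E : Set (Set Ordinal.{0})} (hG : ∀ es, G es ∈ PSet κ l) :
    #(closureUnion G E) ≤ max ℵ₀ #E * Cardinal.lift.{1} κ :=
  (mk_iUnion_le _).trans (mul_le_mul' (mk_list_le_max _) (ciSup_le' fun _ => (hG _).2.le))

lemma closureUnion_mem_PSet (hκ : κ.IsRegular) (hκ₀ : ℵ₀ < κ)
    {G : List (Set Ordinal.{0}) → Set Ordinal.{0}} {E : Set (Set Ordinal.{0})}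
    (hG : ∀ es, G es ∈ PSet κ l) (hE : #E < Cardinal.lift.{1} κ) : closureUnion G E ∈ PSet κ l :=
  iUnion_mem_PSet hκ ((mk_list_le_max _).trans_lt (max_lt (by simpa using hκ₀) hE)) fun _ => hG _

lemma exists_lt_lift_power_of_lt_powerlt {s : Cardinal.{1}} {a b : Cardinal.{0}}
    (h : s < Cardinal.lift.{1} (a ^< b)) : ∃ τ < b, s < Cardinal.lift.{1} (a ^ τ) := by
  obtain ⟨s, hs, rfl⟩ := lt_lift_iff.1 h
  by_contra! hτ
  exact hs.not_ge (powerlt_le.2 fun τ h => lift_le.1 (hτ τ h))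

lemma exists_injOn_mapsTo {α β : Type u} [Nonempty β] {s : Set α} {t : Set β} (h : #s ≤ #t) :
    ∃ f : α → β, InjOn f s ∧ MapsTo f s t := by
  classical
  obtain ⟨g⟩ := (le_def _ _).1 h
  refine ⟨fun x => if hx : x ∈ s then g ⟨x, hx⟩ else Classical.arbitrary β,
    fun x hx y hy hxy => ?_, fun x hx => ?_⟩
  · simp only [dif_pos hx, dif_pos hy] at hxy
    exact congrArg Subtype.val (g.injective (Subtype.ext hxy))
  · simp only [dif_pos hx]
    exact (g _).2

lemma lift_lt_mk_Iio_sdiff {μ lam : Cardinal.{0}} {W : Set Ordinal.{0}} (hμ : ℵ₀ ≤ μ)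
    (hμl : μ < lam) (hW : #W ≤ Cardinal.lift.{1} μ) :
    Cardinal.lift.{1} μ < #↥(Iio lam.ord \ W) := by
  by_contra! h
  have := (le_mk_sdiff_add_mk (Iio lam.ord) W).trans (add_le_add h hW)
  rw [mk_Iio_ordinal, card_ord, add_eq_self (aleph0_le_lift.2 hμ), lift_le] at this
  exact this.not_gt hμl

variable {G : List (Set Ordinal.{0}) → Set Ordinal.{0}} {ϑ μ : Cardinal.{0}} {β : Ordinal.{0}}

lemma mk_closureUnion_PSet_le (hκ : ℵ₀ ≤ κ) (hG : ∀ es, G es ∈ PSet κ l) (hκμ : κ ≤ μ)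
    (hμ : β.card ^< ϑ ≤ μ) : #(closureUnion G (PSet ϑ β)) ≤ Cardinal.lift.{1} μ := by
  have hμ₀ : ℵ₀ ≤ Cardinal.lift.{1} μ := aleph0_le_lift.2 (hκ.trans hκμ)
  calc #(closureUnion G (PSet ϑ β)) ≤ max ℵ₀ #(PSet ϑ β) * Cardinal.lift.{1} κ :=
        mk_closureUnion_le hG
    _ ≤ Cardinal.lift.{1} μ * Cardinal.lift.{1} μ := mul_le_mul' (max_le hμ₀
        ((mk_PSet_le ϑ β).trans (lift_le.2 (max_le (hκ.trans hκμ) hμ)))) (lift_le.2 hκμ)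
    _ = Cardinal.lift.{1} μ := mul_eq_self hμ₀

/-- For `κ = μ` the union is over fewer than `κ` tuples, and regularity applies. -/
lemma mk_closureUnion_PSet_lt (hκ : κ.IsRegular) (hκ₀ : ℵ₀ < κ) (hG : ∀ es, G es ∈ PSet κ l)
    (hκμ : κ ≤ μ) (hμ : β.card ^< ϑ < μ) :
    #(closureUnion G (PSet ϑ β)) < Cardinal.lift.{1} μ := by
  have hE : #(PSet ϑ β) < Cardinal.lift.{1} μ :=
    (mk_PSet_le ϑ β).trans_lt (lift_lt.2 (max_lt (hκ₀.trans_le hκμ) hμ))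
  rcases hκμ.lt_or_eq with hκμ | rfl
  · have hμ₀ : ℵ₀ < Cardinal.lift.{1} μ := by simpa using hκ₀.trans hκμ
    exact (mk_closureUnion_le hG).trans_lt
      (mul_lt_of_lt hμ₀.le (max_lt hμ₀ hE) (lift_lt.2 hκμ))
  · exact (closureUnion_mem_PSet hκ hκ₀ hG hE).2

lemma exists_injOn_mapsTo_Iio_sdiff (hκ : ℵ₀ ≤ κ) {H : List (Set Ordinal.{0}) → Set Ordinal.{0}}
    (hH : ∀ es, H es ∈ PSet κ l) {c : Set Ordinal.{0}} (hc : c ∈ PSet κ l) {lam : Cardinal.{0}}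
    (hκμ : κ ≤ μ) (hβμ : β.card ≤ μ) (hμ : β.card ^< ϑ ≤ μ) (hμlam : μ < lam) :
    ∃ m : Set Ordinal.{0} → Ordinal.{0}, InjOn m (PSet ϑ β) ∧
      MapsTo m (PSet ϑ β) (Iio lam.ord \ (c ∪ Iio β ∪ closureUnion H (PSet ϑ β))) := by
  have hμ₀ : ℵ₀ ≤ Cardinal.lift.{1} μ := aleph0_le_lift.2 (hκ.trans hκμ)
  have hW : #↥(c ∪ Iio β ∪ closureUnion H (PSet ϑ β)) ≤ Cardinal.lift.{1} μ := by
    refine (mk_union_le _ _).trans (add_le_of_le hμ₀ ((mk_union_le _ _).trans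
      (add_le_of_le hμ₀ (hc.2.le.trans (lift_le.2 hκμ)) ?_)) (mk_closureUnion_PSet_le hκ hH hκμ hμ))
    rw [mk_Iio_ordinal]
    exact lift_le.2 hβμ
  exact exists_injOn_mapsTo <| ((mk_PSet_le ϑ β).trans (lift_le.2 (max_le (hκ.trans hκμ) hμ))).trans
    (lift_lt_mk_Iio_sdiff (hκ.trans hκμ) hμlam hW).le

end Counting

section Marker

def marker (m : Set Ordinal.{0} → Ordinal.{0}) (E : Set (Set Ordinal.{0}))
    (es : List (Set Ordinal.{0})) : Set Ordinal.{0} :=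
  {o | ∃ x ∈ E, es = [x] ∧ o = m x}

variable {m : Set Ordinal.{0} → Ordinal.{0}} {E : Set (Set Ordinal.{0})}

lemma marker_mem_PSet (hκ : ℵ₀ ≤ κ) (hm : MapsTo m E (Iio l)) (es : List (Set Ordinal.{0})) :
    marker m E es ∈ PSet κ l := by
  refine mem_PSet_of_finite hκ (by rintro _ ⟨x, hx, -, rfl⟩; exact hm hx) (Subsingleton.finite ?_)
  rintro _ ⟨x, -, hx, rfl⟩ _ ⟨y, -, hy, rfl⟩
  rw [hx, List.cons.injEq] at hy
  rw [hy.1]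

lemma apply_mem_of_mem_CSet_marker {a x : Set Ordinal.{0}} (ha : a ∈ CSet κ l σ γ (marker m E))
    (hx : x ∈ E) (hax : inP σ γ a x) : m x ∈ a :=
  ha.2.2 [x] (by simpa using hax) ⟨x, hx, rfl, rfl⟩

end Marker

section Main

variable {θ θ' : Cardinal.{0}} {δ δ' : Ordinal.{0}} {N N' : Set (Set (Set Ordinal.{0}))}
  {A : Set (Set Ordinal.{0})}

lemma exists_cone_subset_of_eq_restrict (hκ : κ.IsRegular) (hκ₀ : ℵ₀ < κ) (hθ' : 0 < θ')
    (hN : IsIdeal κ l N) (hN' : IsLeastNormalIdeal κ l θ' δ' N')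
    (hNA : N' = restrict κ l N A) :
    ∃ H : List (Set Ordinal.{0}) → Set Ordinal.{0}, (∀ es, H es ∈ PSet κ l) ∧
      ∃ c ∈ PSet κ l, ∀ a ∈ CSet κ l θ' δ' H, c ⊆ a → a ∈ A := by
  have hA : PSet κ l \ A ∈ N' := hNA ▸ ⟨sdiff_subset, by
    rw [sdiff_inter_self]; exact hN.nonCofinal_subset (empty_mem_Ikl (aleph0_pos.trans hκ₀))⟩
  obtain ⟨H, hH, c, hc, hcA⟩ :=
    exists_of_mem_closureIdeal (hN'.subset_closureIdeal hκ hκ₀ hθ' hA)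
  exact ⟨H, hH, c, hc, fun a haH hca => by_contra fun haA => hcA a haH hca ⟨haH.1, haA⟩⟩

lemma exists_cone_subset_CSet_of_eq_restrict (hκ : κ.IsRegular) (hκ₀ : ℵ₀ < κ) (hθ : 0 < θ)
    (hθ' : 0 < θ') (hN : IsLeastNormalIdeal κ l θ δ N) (hN' : IsNormalIdeal κ l θ' δ' N')
    (hNA : N' = restrict κ l N A) {H₀ : List (Set Ordinal.{0}) → Set Ordinal.{0}}
    {c₀ : Set Ordinal.{0}} (hc₀A : ∀ a ∈ CSet κ l θ' δ' H₀, c₀ ⊆ a → a ∈ A)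
    {H : List (Set Ordinal.{0}) → Set Ordinal.{0}} (hH : ∀ es, H es ∈ PSet κ l) :
    ∃ G : List (Set Ordinal.{0}) → Set Ordinal.{0}, (∀ es, G es ∈ PSet κ l) ∧
      ∃ c ∈ PSet κ l, ∀ a ∈ CSet κ l θ δ G, a ∈ CSet κ l θ' δ' H₀ → c₀ ∪ c ⊆ a →
        a ∈ CSet κ l θ' δ' H := by
  have hHA : (PSet κ l \ CSet κ l θ' δ' H) ∩ A ∈ N := by
    have h := diff_CSet_mem hN'.1 hN'.2 hκ₀ hθ' hH
    rw [hNA] at h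
    exact h.2
  obtain ⟨G, hG, c, hc, hcG⟩ :=
    exists_of_mem_closureIdeal (hN.subset_closureIdeal hκ hκ₀ hθ hHA)
  exact ⟨G, hG, c, hc, fun a haG haH₀ ha => by_contra fun haH => hcG a haG
    (subset_union_right.trans ha) ⟨⟨haG.1, haH⟩, hc₀A a haH₀ (subset_union_left.trans ha)⟩⟩

variable {K : Set (Set (Set Ordinal.{0}))} {G₀ H₀ : List (Set Ordinal.{0}) → Set Ordinal.{0}}
  {m : Set Ordinal.{0} → Ordinal.{0}} {E : Set (Set Ordinal.{0})} {d : Set Ordinal.{0}}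
  {τ : Cardinal.{0}}

/-- The least set closed under `G₀` and `H₀` containing `d`, `x` and the ordinals below `τ⁺` has
`x` as a legal argument of the marker function, so it contains `m x`. -/
lemma apply_mem_of_cone (hκ : ℵ₀ ≤ κ) (hθ : 0 < θ) (hθ' : 0 < θ') (hθ'κ : θ' ≤ κ)
    (hθ'δ' : θ'.ord ≤ δ') (hδ'l : δ' ≤ l) (hK : IsIdeal κ l K)
    (hG₀ : PSet κ l \ CSet κ l θ δ G₀ ∈ K) (hH₀ : PSet κ l \ CSet κ l θ' δ' H₀ ∈ K)
    (hd : d ∈ PSet κ l)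
    (hcone : ∀ a ∈ CSet κ l θ δ G₀, a ∈ CSet κ l θ' δ' H₀ → d ⊆ a → a ∈ CSet κ l θ' δ' (marker m E))
    (hτ : τ < thetaBar κ θ') {x : Set Ordinal.{0}} (hxE : x ∈ E) (hxδ' : x ⊆ Iio δ')
    (hxτ : #x ≤ Cardinal.lift.{1} τ) :
    m x ∈ d ∪ Iio δ' ∪ closureUnion G₀ (PSet (thetaBar κ θ) δ) ∪
      closureUnion H₀ (PSet (thetaBar κ θ') δ') := by
  have hκ0 : 0 < κ := aleph0_pos.trans_le hκ
  have hτθ' : Order.succ τ ≤ θ' := Order.succ_le_of_lt (hτ.trans_le (thetaBar_le_self hκ0))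
  set t := Iio (Order.succ τ).ord
  have htθ' : t ⊆ Iio θ'.ord := Iio_subset_Iio (ord_le_ord.2 hτθ')
  have htδ' : t ⊆ Iio δ' := htθ'.trans (Iio_subset_Iio hθ'δ')
  have ht : t ∈ PSet κ l := Iio_mem_PSet (succ_lt_of_lt_thetaBar hκ0 hθ'κ hτ)
    ((ord_le_ord.2 hτθ').trans (hθ'δ'.trans hδ'l))
  have hx : x ∈ PSet κ l := ⟨hxδ'.trans (Iio_subset_Iio hδ'l),
    hxτ.trans_lt (lift_lt.2 (hτ.trans_le ((thetaBar_le_self hκ0).trans hθ'κ)))⟩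
  obtain ⟨a, haG, haH, hya, hay⟩ := exists_hull hK hκ hθ hθ' hG₀ hH₀
    (union_mem_PSet hκ (union_mem_PSet hκ hd hx) ht) (Or.inr (mem_Iio.2 (by simp)))
  have hxa : inP θ' δ' a x := by
    refine ⟨subset_inter (fun o ho => hya (Or.inl (Or.inr ho))) hxδ', ?_⟩
    calc #x < Cardinal.lift.{1} (Order.succ τ) := hxτ.trans_lt (lift_lt.2 (Order.lt_succ τ))
      _ = #t := by rw [mk_Iio_ordinal, card_ord]
      _ ≤ #↥(a ∩ Iio θ'.ord) := mk_le_mk_of_subset (subset_inter (fun o ho => hya (Or.inr ho)) htθ')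
  rcases hay (apply_mem_of_mem_CSet_marker (hcone a haG haH fun o ho => hya (Or.inl (Or.inl ho)))
    hxE hxa) with (((h | h) | h) | h) | h
  · exact Or.inl (Or.inl (Or.inl h))
  · exact Or.inl (Or.inl (Or.inr (hxδ' h)))
  · exact Or.inl (Or.inl (Or.inr (htδ' h)))
  · exact Or.inl (Or.inr h)
  · exact Or.inr h

lemma lift_powerlt_le_of_cone (hκ : ℵ₀ ≤ κ) (hθ : 0 < θ) (hθ' : 0 < θ') (hθ'κ : θ' ≤ κ)
    (hθ'δ' : θ'.ord ≤ δ') (hδ'l : δ' ≤ l) (hδ' : ℵ₀ ≤ δ'.card) (hK : IsIdeal κ l K)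
    (hG₀ : PSet κ l \ CSet κ l θ δ G₀ ∈ K) (hH₀ : PSet κ l \ CSet κ l θ' δ' H₀ ∈ K)
    {d c : Set Ordinal.{0}} (hd : d ∈ PSet κ l) (hc : c ∈ PSet κ l)
    (hcone : ∀ a ∈ CSet κ l θ δ G₀, a ∈ CSet κ l θ' δ' H₀ → d ∪ c ⊆ a →
      a ∈ CSet κ l θ' δ' (marker m (PSet (thetaBar κ θ') δ')))
    (hm : InjOn m (PSet (thetaBar κ θ') δ'))
    (hmW : ∀ x ∈ PSet (thetaBar κ θ') δ',
      m x ∉ d ∪ Iio δ' ∪ closureUnion H₀ (PSet (thetaBar κ θ') δ')) :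
    Cardinal.lift.{1} (δ'.card ^< thetaBar κ θ') ≤
      #↥(c ∪ closureUnion G₀ (PSet (thetaBar κ θ) δ)) := by
  by_contra! h
  obtain ⟨τ, hτ, hτc⟩ := exists_lt_lift_power_of_lt_powerlt h
  set X := {x : Set Ordinal.{0} | x ⊆ Iio δ' ∧ #x ≤ Cardinal.lift.{1} τ}
  have hXE : X ⊆ PSet (thetaBar κ θ') δ' := fun x hx => ⟨hx.1, hx.2.trans_lt (lift_lt.2 hτ)⟩
  have hτδ' : τ ≤ δ'.card :=
    (hτ.trans_le (thetaBar_le_self (aleph0_pos.trans_le hκ))).le.trans (ord_le.1 hθ'δ')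
  refine hτc.not_ge ?_
  calc Cardinal.lift.{1} (δ'.card ^ τ) ≤ #X := lift_power_le_mk_bounded_subset hδ' hτδ'
    _ = #↥(m '' X) := (mk_image_eq_of_injOn _ _ (hm.mono hXE)).symm
    _ ≤ #↥(c ∪ closureUnion G₀ (PSet (thetaBar κ θ) δ)) := by
      refine mk_le_mk_of_subset (image_subset_iff.2 fun x hx => ?_)
      have hW := hmW x (hXE hx)
      rcases apply_mem_of_cone hκ hθ hθ' hθ'κ hθ'δ' hδ'l hK hG₀ hH₀ (union_mem_PSet hκ hd hc)
        hcone hτ (hXE hx) hx.1 hx.2 with (((h | h) | h) | h) | h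
      · exact absurd (Or.inl (Or.inl h)) hW
      · exact Or.inl h
      · exact absurd (Or.inl (Or.inr h)) hW
      · exact Or.inr h
      · exact absurd (Or.inr h) hW

end Main

theorem stmt17_general (κ lam θ θ' : Cardinal.{0}) (δ δ' : Ordinal.{0})
    (hκ : κ.IsRegular) (hθ2 : 2 ≤ θ)
    (hκδ' : κ.ord ≤ δ') (hδδ' : δ ≤ δ') (hdl2 : δ' ≤ lam.ord)
    (hθθ' : θ ≤ θ') (hθ'κ : θ' ≤ κ)
    (h1 : δ.card ^< thetaBar κ θ < δ'.card ^< thetaBar κ θ')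
    (h2 : δ'.card ^< thetaBar κ θ' < lam) :
    ∀ N N', IsLeastNormalIdeal κ lam.ord θ δ N →
      IsLeastNormalIdeal κ lam.ord θ' δ' N' →
      ∀ A ∈ plus κ lam.ord N, N' ≠ restrict κ lam.ord N A := by
  intro N N' hN hN' A _ hNA
  have hθ : 0 < θ := lt_of_lt_of_le (by norm_num) hθ2
  have hθ' : 0 < θ' := hθ.trans_le hθθ'
  have hκ₀ : ℵ₀ < κ := aleph0_lt_of_isNormalIdeal hκ (hθ2.trans hθθ') hκδ' hdl2 hN'.1
  have hκδ'c : κ ≤ δ'.card := ord_le.1 hκδ'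
  have hδ'μ : δ'.card ≤ δ'.card ^< thetaBar κ θ' := by
    simpa using le_powerlt δ'.card (one_lt_thetaBar hκ.aleph0_le
      (Cardinal.one_lt_two.trans_le (hθ2.trans hθθ')))
  have hκμ := hκδ'c.trans hδ'μ
  obtain ⟨hK, hKn⟩ := closureIdeal_isNormalIdeal hκ hκ₀ hθ' ⟨N', hN'.1⟩
  have hKn' := hKn.of_le hK hκ.aleph0_le hθ hθθ' hδδ'
    ((ord_pos.2 (aleph0_pos.trans hκ₀)).trans_le (hκδ'.trans hdl2))
  obtain ⟨H₀, hH₀, c₀, hc₀, hc₀A⟩ := exists_cone_subset_of_eq_restrict hκ hκ₀ hθ' hN.1.1 hN' hNA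
  obtain ⟨m, hm, hmW⟩ :=
    exists_injOn_mapsTo_Iio_sdiff hκ.aleph0_le hH₀ hc₀ hκμ hδ'μ le_rfl h2
  obtain ⟨G₀, hG₀, c, hc, hcone⟩ := exists_cone_subset_CSet_of_eq_restrict hκ hκ₀ hθ hθ' hN
    hN'.1 hNA hc₀A (marker_mem_PSet hκ.aleph0_le (hmW.mono_right sdiff_subset))
  refine (lift_powerlt_le_of_cone hκ.aleph0_le hθ hθ' hθ'κ ((ord_le_ord.2 hθ'κ).trans hκδ') hdl2
    (hκ.aleph0_le.trans hκδ'c) hK (diff_CSet_mem hK hKn' hκ₀ hθ hG₀)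
    (diff_CSet_mem hK hKn hκ₀ hθ' hH₀) hc₀ hc hcone hm fun x hx => (hmW hx).2).not_gt ?_
  exact (mk_union_le _ _).trans_lt (add_lt_of_lt (aleph0_le_lift.2 (hκ.aleph0_le.trans hκμ))
    (hc.2.trans_le (lift_le.2 hκμ)) (mk_closureUnion_PSet_lt hκ hκ₀ hG₀ hκμ h1))

/-- Let `δ'` be an ordinal with `max(κ,δ) ≤ δ' ≤ λ` and `θ'` a cardinal with
`θ ≤ θ' ≤ κ`, and assume there exist a `[δ]^{<θ}`-normal ideal and a `[δ']^{<θ'}`-normal ideal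
on `P_κ(λ)`. Assume `|δ|^{<θ̄} < |δ'|^{<θ̄'} < λ`. Then
`NS^{[δ']^{<θ'}}_{κ,λ} ≠ NS^{[δ]^{<θ}}_{κ,λ} | A` for every `A ∈ (NS^{[δ]^{<θ}}_{κ,λ})⁺`. -/
theorem stmt17 (κ lam θ θ' : Cardinal.{0}) (δ δ' : Ordinal.{0})
    (hκ : κ.IsRegular) (hkl : κ ≤ lam) (hθ2 : 2 ≤ θ) (hθκ : θ ≤ κ)
    (hδ1 : 1 ≤ δ) (hdl : δ ≤ lam.ord)
    (hκδ' : κ.ord ≤ δ') (hδδ' : δ ≤ δ') (hdl2 : δ' ≤ lam.ord)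
    (hθθ' : θ ≤ θ') (hθ'κ : θ' ≤ κ)
    (hex : ∃ J, IsNormalIdeal κ lam.ord θ δ J)
    (hex' : ∃ J, IsNormalIdeal κ lam.ord θ' δ' J)
    (h1 : δ.card ^< thetaBar κ θ < δ'.card ^< thetaBar κ θ')
    (h2 : δ'.card ^< thetaBar κ θ' < lam) :
    ∀ N N', IsLeastNormalIdeal κ lam.ord θ δ N →
      IsLeastNormalIdeal κ lam.ord θ' δ' N' →
      ∀ A ∈ plus κ lam.ord N, N' ≠ restrict κ lam.ord N A :=
  stmt17_general κ lam θ θ' δ δ' hκ hθ2 hκδ' hδδ' hdl2 hθθ' hθ'κ h1 h2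

end PklNormal
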